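/- Let p ∈ ℕ (p ≥ 1). On the vertex set {1, …, p+3} define the p-simplices σ_j := {1, …, p+2} \ {j} and ρ_j := ({1, …, p+1} ∪ {p+3}) \ {j} for j ∈ {1, …, p+1}, and let L_p := {τ ⊆ {1, …, p+3} : τ ≠ ∅ and (τ ⊆ σ_j or τ ⊆ ρ_j for some j ∈ {1, …, p+1})}. Then L_p is a simplicial complex of dimension p, and L_p does not contain the boundary of a (p+1)-simplex; that is, there is no (p+2)-element subset S ⊆ {1, …, p+3} such that every (p+1)-element subset of S belongs to L_p. -/

import Mathlib

namespace RSC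

variable {V : Type*} [DecidableEq V]

/-- A finite abstract simplicial complex on vertex type `V`. -/
structure SC (V : Type*) [DecidableEq V] where
  simplices : Finset (Finset V)
  nonempty_mem : ∀ σ ∈ simplices, σ.Nonempty
  down_closed : ∀ σ ∈ simplices, ∀ τ ⊆ σ, τ.Nonempty → τ ∈ simplices

namespace SC

/-- The `p`-simplices (cardinality `p+1`). -/
def simplicesDim (K : SC V) (p : ℕ) : Finset (Finset V) :=
  K.simplices.filter fun σ => σ.card = p + 1

/-- The number of `p`-simplices. -/
def fnum (K : SC V) (p : ℕ) : ℕ := (K.simplicesDim p).card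

/-- The dimension of a finite simplicial complex. -/
def dimension (K : SC V) : ℕ := K.simplices.sup fun σ => σ.card - 1

/-- The `p`-th chain group over `ℤ₂`. -/
abbrev Chain (K : SC V) (p : ℕ) : Type _ := ↥(K.simplicesDim p) → ZMod 2

/-- The boundary map `∂_{p+1} : C_{p+1} → C_p`. -/
def boundary (K : SC V) (p : ℕ) : Chain K (p + 1) →ₗ[ZMod 2] Chain K p where
  toFun f := fun τ => ∑ σ : ↥(K.simplicesDim (p + 1)),
    if (τ : Finset V) ⊆ (σ : Finset V) then f σ else 0
  map_add' f g := by
    funext τ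
    simp only [Pi.add_apply]
    rw [← Finset.sum_add_distrib]
    refine Finset.sum_congr rfl fun σ _ => ?_
    split <;> simp
  map_smul' c f := by
    funext τ
    simp only [Pi.smul_apply, smul_eq_mul, RingHom.id_apply]
    rw [Finset.mul_sum]
    refine Finset.sum_congr rfl fun σ _ => ?_
    split <;> simp

/-- The rank of the cycle space `Z_p = ker ∂_p` (with `∂_0 = 0`). -/
noncomputable def cycleRank (K : SC V) : ℕ → ℕ
  | 0 => Module.finrank (ZMod 2) (Chain K 0)
  | (q + 1) => Module.finrank (ZMod 2) (LinearMap.ker (K.boundary q))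

/-- The `p`-th Betti number over `ℤ₂`: `dim Z_p − dim B_p`. -/
noncomputable def betti (K : SC V) (p : ℕ) : ℕ :=
  K.cycleRank p - Module.finrank (ZMod 2) (LinearMap.range (K.boundary p))

/-- The induced subcomplex on a vertex set `I`. -/
def induced (K : SC V) (I : Finset V) : SC V where
  simplices := K.simplices.filter fun σ => σ ⊆ I
  nonempty_mem := fun σ hσ => K.nonempty_mem σ (Finset.mem_filter.mp hσ).1
  down_closed := fun σ hσ τ hτσ hτ => by
    rw [Finset.mem_filter] at hσ ⊢
    exact ⟨K.down_closed σ hσ.1 τ hτσ hτ, hτσ.trans hσ.2⟩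

/-- The `j`-skeleton. -/
def skeleton (K : SC V) (j : ℕ) : SC V where
  simplices := K.simplices.filter fun σ => σ.card ≤ j + 1
  nonempty_mem := fun σ hσ => K.nonempty_mem σ (Finset.mem_filter.mp hσ).1
  down_closed := fun σ hσ τ hτσ hτ => by
    rw [Finset.mem_filter] at hσ ⊢
    exact ⟨K.down_closed σ hσ.1 τ hτσ hτ, (Finset.card_le_card hτσ).trans hσ.2⟩

/-- The subcomplex obtained by deleting the vertex `v`. -/
def deleteVertex (K : SC V) (v : V) : SC V where
  simplices := K.simplices.filter fun σ => v ∉ σ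
  nonempty_mem := fun σ hσ => K.nonempty_mem σ (Finset.mem_filter.mp hσ).1
  down_closed := fun σ hσ τ hτσ hτ => by
    rw [Finset.mem_filter] at hσ ⊢
    exact ⟨K.down_closed σ hσ.1 τ hτσ hτ, fun hv => hσ.2 (hτσ hv)⟩

/-- The vertex set of `K`. -/
def verts (K : SC V) : Finset V := K.simplices.sup id

/-- `v` is a vertex of `K`. -/
def IsVertex (K : SC V) (v : V) : Prop := ({v} : Finset V) ∈ K.simplices

/-- The `n`-simplex degree of a vertex `v`. -/
def deg (K : SC V) (n : ℕ) (v : V) : ℕ :=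
  (K.simplices.filter fun σ => v ∈ σ ∧ σ.card = n + 1).card

/-- Two vertices are joined by a path of edges of `K`. -/
def Reachable (K : SC V) (v w : V) : Prop :=
  Relation.ReflTransGen (fun a b => ({a, b} : Finset V) ∈ K.simplices) v w

/-- The Euler characteristic of `K`. -/
noncomputable def euler (K : SC V) : ℤ :=
  ∑ i ∈ Finset.range (K.dimension + 1), (-1 : ℤ) ^ i * K.fnum i

end SC

end RSC

namespace RSC

open SC

/-- `σ_j = {1, …, p+2} \ {j}`. -/
def sigmaSimp (p j : ℕ) : Finset ℕ := (Finset.Icc 1 (p + 2)).erase j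

/-- `ρ_j = ({1, …, p+1} ∪ {p+3}) \ {j}`. -/
def rhoSimp (p j : ℕ) : Finset ℕ := ((Finset.Icc 1 (p + 1)) ∪ {p + 3}).erase j

/-- The defining property of the simplices of `L_p`: nonempty and contained in
some `σ_j` or `ρ_j` with `j ∈ {1, …, p+1}`. -/
def LpPred (p : ℕ) (τ : Finset ℕ) : Prop :=
  0 < τ.card ∧ ∃ j ∈ Finset.Icc 1 (p + 1), τ ⊆ sigmaSimp p j ∨ τ ⊆ rhoSimp p j

instance (p : ℕ) : DecidablePred (LpPred p) := fun τ => by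
  unfold LpPred; infer_instance

/-- The complex `L_p` generated by the `p`-simplices `σ_j, ρ_j`, `j ∈ {1, …, p+1}`. -/
def Lp (p : ℕ) : SC ℕ where
  simplices := (Finset.Icc 1 (p + 3)).powerset.filter (LpPred p)
  nonempty_mem := fun τ hτ =>
    Finset.card_pos.mp ((Finset.mem_filter.mp hτ).2 : LpPred p τ).1
  down_closed := fun τ hτ τ' hτ' hne => by
    rw [Finset.mem_filter, Finset.mem_powerset] at hτ ⊢
    obtain ⟨hsub, -, j, hj, hcase⟩ := hτ
    exact ⟨hτ'.trans hsub, Finset.card_pos.mpr hne, j, hj,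
      hcase.imp hτ'.trans hτ'.trans⟩

end RSC

/-!
A `(p+1)`-element simplex of `L_p` is one of the generators `σ_j`, `ρ_j`, each of which misses
some `j ≤ p+1` and one of the two apexes `p+2`, `p+3`. A `(p+2)`-subset `S` of `{1, …, p+3}`
either contains both apexes, and then (as `p ≥ 1`) so does one of its `(p+1)`-subsets, or it
misses an apex, and then it contains the face `{1, …, p+1}`.
-/

namespace RSC

open SC Finset

variable {p : ℕ}

lemma mem_Lp_simplices {τ : Finset ℕ} :
    τ ∈ (Lp p).simplices ↔ τ ⊆ Icc 1 (p + 3) ∧ LpPred p τ := by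
  simp [Lp]

lemma card_sigmaSimp {j : ℕ} (hj : j ∈ Icc 1 (p + 1)) : #(sigmaSimp p j) = p + 1 := by
  rw [mem_Icc] at hj
  rw [sigmaSimp, card_erase_of_mem (by rw [mem_Icc]; omega), Nat.card_Icc]
  omega

lemma card_rhoSimp {j : ℕ} (hj : j ∈ Icc 1 (p + 1)) : #(rhoSimp p j) = p + 1 := by
  have hdisj : Disjoint (Icc 1 (p + 1)) {p + 3} := by simp
  rw [rhoSimp, card_erase_of_mem (mem_union_left _ hj), card_union_of_disjoint hdisj,
    Nat.card_Icc, card_singleton]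
  omega

lemma sigmaSimp_mem_Lp {j : ℕ} (hj : j ∈ Icc 1 (p + 1)) : sigmaSimp p j ∈ (Lp p).simplices :=
  mem_Lp_simplices.mpr ⟨(erase_subset _ _).trans (Icc_subset_Icc_right (by omega)),
    by rw [card_sigmaSimp hj]; omega, j, hj, Or.inl subset_rfl⟩

lemma card_le_of_mem_Lp {τ : Finset ℕ} (hτ : τ ∈ (Lp p).simplices) : #τ ≤ p + 1 := by
  obtain ⟨-, -, j, hj, hσ | hρ⟩ := mem_Lp_simplices.mp hτ
  · exact (card_le_card hσ).trans (card_sigmaSimp hj).le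
  · exact (card_le_card hρ).trans (card_rhoSimp hj).le

lemma not_Icc_subset_of_mem_Lp {τ : Finset ℕ} (hτ : τ ∈ (Lp p).simplices) :
    ¬ Icc 1 (p + 1) ⊆ τ := fun hsub => by
  obtain ⟨-, -, j, hj, hσ | hρ⟩ := mem_Lp_simplices.mp hτ
  · exact (mem_erase.mp (hσ (hsub hj))).1 rfl
  · exact (mem_erase.mp (hρ (hsub hj))).1 rfl

lemma not_apexes_subset_of_mem_Lp {τ : Finset ℕ} (hτ : τ ∈ (Lp p).simplices) :
    ¬ {p + 2, p + 3} ⊆ τ := fun hsub => by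
  obtain ⟨-, -, j, -, hσ | hρ⟩ := mem_Lp_simplices.mp hτ
  · have h := hσ (hsub (mem_insert_of_mem (mem_singleton_self _)))
    simp only [sigmaSimp, mem_erase, mem_Icc] at h
    omega
  · have h := hρ (hsub (mem_insert_self _ _))
    simp only [rhoSimp, mem_erase, mem_union, mem_Icc, mem_singleton] at h
    omega

lemma dimension_Lp : (Lp p).dimension = p := by
  refine le_antisymm (Finset.sup_le fun τ hτ => ?_) ?_
  · have := card_le_of_mem_Lp hτ
    omega
  · have h1 : 1 ∈ Icc 1 (p + 1) := by simp
    have h := le_sup (f := fun σ : Finset ℕ => #σ - 1) (sigmaSimp_mem_Lp h1)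
    simpa [dimension, card_sigmaSimp h1] using h

lemma exists_facet_not_mem_Lp (hp : 1 ≤ p) {S : Finset ℕ} (hS : S ⊆ Icc 1 (p + 3))
    (hcard : #S = p + 2) : ∃ τ ⊆ S, #τ = p + 1 ∧ τ ∉ (Lp p).simplices := by
  by_cases hapex : {p + 2, p + 3} ⊆ S
  · have hapex_card : #{p + 2, p + 3} ≤ p + 1 := card_le_two.trans (by omega)
    obtain ⟨τ, hapexτ, hτS, hτ⟩ := exists_subsuperset_card_eq hapex hapex_card (by omega)
    exact ⟨τ, hτS, hτ, fun hmem => not_apexes_subset_of_mem_Lp hmem hapexτ⟩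
  · obtain ⟨m, hm, hmS⟩ := not_subset.mp hapex
    have hm' : p + 2 ≤ m ∧ m ≤ p + 3 := by simp only [mem_insert, mem_singleton] at hm; omega
    have hSeq : S = (Icc 1 (p + 3)).erase m := by
      refine eq_of_subset_of_card_le (subset_erase.mpr ⟨hS, hmS⟩) ?_
      rw [card_erase_of_mem (by rw [mem_Icc]; omega), Nat.card_Icc, hcard]
      omega
    refine ⟨Icc 1 (p + 1), ?_, by simp, fun hmem => not_Icc_subset_of_mem_Lp hmem subset_rfl⟩
    rw [hSeq]
    exact subset_erase.mpr ⟨Icc_subset_Icc_right (by omega), by simp only [mem_Icc]; omega⟩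

end RSC

open RSC RSC.SC in
/-- `L_p` has dimension `p` and does not contain the boundary of a
`(p+1)`-simplex. -/
theorem Lp_dim_and_no_sphere (p : ℕ) (hp : 1 ≤ p) :
    (Lp p).dimension = p ∧
      ¬ ∃ S ⊆ Finset.Icc 1 (p + 3), S.card = p + 2 ∧
        ∀ τ ⊆ S, τ.card = p + 1 → τ ∈ (Lp p).simplices := by
  refine ⟨dimension_Lp, fun ⟨S, hS, hcard, hall⟩ => ?_⟩
  obtain ⟨τ, hτS, hτcard, hτ⟩ := exists_facet_not_mem_Lp hp hS hcard
  exact hτ (hall τ hτS hτcard)
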